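/- Let a, b ∈ ℝ. The system x − 2/x = a − 1/y + 1/(x+y), y − 2/y = b − 1/x + 1/(x+y) has a unique solution (x*, y*) with x* > 0 and y* > 0. Moreover, with x_1 = (a + √(a² + 8))/2, y_1 = (s + √(s² + 6))/2 where s = b − (|a| + √2)/2, and the recursion x_{n+1} = (A_n + √(A_n² + 8))/2 with A_n = a − 1/y_n + 1/(x_n + y_n), y_{n+1} = (B_n + √(B_n² + 8))/2 with B_n = b − 1/x_n + 1/(x_n + y_n), one has lim_{n→∞} x_n = x* and lim_{n→∞} y_n = y*. -/

import Mathlib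

open Filter

/-- The iterative scheme of Proposition 4.2: `dysonSeq a b n = (x_{n+1}, y_{n+1})`,
i.e. `dysonSeq a b 0` is the pair `(x_1, y_1)` of the proposition. -/
noncomputable def dysonSeq (a b : ℝ) : ℕ → ℝ × ℝ
  | 0 =>
      ((a + Real.sqrt (a ^ 2 + 8)) / 2,
        ((b - (|a| + Real.sqrt 2) / 2)
          + Real.sqrt ((b - (|a| + Real.sqrt 2) / 2) ^ 2 + 6)) / 2)
  | n + 1 =>
      let p := dysonSeq a b n
      let A := a - 1 / p.2 + 1 / (p.1 + p.2)
      let B := b - 1 / p.1 + 1 / (p.1 + p.2)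
      ((A + Real.sqrt (A ^ 2 + 8)) / 2, (B + Real.sqrt (B ^ 2 + 8)) / 2)

/-!
Write `φ t = (t + √(t² + 8)) / 2` for the positive root of `X² - tX - 2`. Positive solutions of the
system are the fixed points of `T (x, y) = (φ (a - 1/y + 1/(x+y)), φ (b - 1/x + 1/(x+y)))`, and the
scheme is `(x_{n+1}, y_{n+1}) = T (x_n, y_n)`. As `1/y - 1/(x+y)` increases in `x` and decreases
in `y`, `T` reverses the order "`x` smaller and `y` larger"; it maps a compact box in the open
quadrant into itself, and `(x_1, y_1)` is a corner of that box. Hence the even and the odd iterates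
are monotone in each coordinate and converge to `(p, q)` and `(P, Q)` with `T (p, q) = (P, Q)` and
`T (P, Q) = (p, q)`. Subtracting the equations, `P - p` and `Q - q` satisfy two linear relations
with positive coefficients, one forcing them to have the same sign and the other opposite signs,
so both vanish. The same computation applied to two solutions gives uniqueness.
-/

open Set Topology

noncomputable def posRoot (c t : ℝ) : ℝ := (t + √(t ^ 2 + c)) / 2

section posRoot

variable {c : ℝ}

lemma posRoot_pos (hc : 0 < c) (t : ℝ) : 0 < posRoot c t := by
  have : |t| < √(t ^ 2 + c) := by
    rw [← Real.sqrt_sq_eq_abs]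
    exact Real.sqrt_lt_sqrt (sq_nonneg t) (by linarith)
  unfold posRoot
  linarith [neg_abs_le t]

lemma posRoot_sub_div (hc : 0 < c) (t : ℝ) : posRoot c t - c / 4 / posRoot c t = t := by
  have hpos := posRoot_pos hc t
  have hsq : √(t ^ 2 + c) ^ 2 = t ^ 2 + c := Real.sq_sqrt (by positivity)
  field_simp
  unfold posRoot
  linear_combination hsq

lemma strictMonoOn_sub_div {k : ℝ} (hk : 0 ≤ k) :
    StrictMonoOn (fun X : ℝ => X - k / X) (Ioi 0) := by
  intro X hX Y _ hXY
  have : k / Y ≤ k / X := div_le_div_of_nonneg_left hk hX hXY.le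
  dsimp only
  linarith

lemma le_posRoot_iff (hc : 0 < c) {t X : ℝ} (hX : 0 < X) :
    X ≤ posRoot c t ↔ X - c / 4 / X ≤ t := by
  conv_rhs => rw [← posRoot_sub_div hc t]
  exact ((strictMonoOn_sub_div (by positivity)).le_iff_le hX (posRoot_pos hc t)).symm

lemma eq_posRoot_iff (hc : 0 < c) {t X : ℝ} (hX : 0 < X) :
    X = posRoot c t ↔ X - c / 4 / X = t := by
  conv_rhs => rw [← posRoot_sub_div hc t]
  exact ((strictMonoOn_sub_div (by positivity)).injOn.eq_iff hX (posRoot_pos hc t)).symm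

lemma posRoot_mono (hc : 0 < c) : Monotone (posRoot c) := fun t u htu => by
  rwa [le_posRoot_iff hc (posRoot_pos hc t), posRoot_sub_div hc]

end posRoot

lemma one_div_posRoot_eight_le (t : ℝ) : 1 / posRoot 8 t ≤ (|t| + √2) / 2 := by
  have hpos := posRoot_pos (by norm_num : (0 : ℝ) < 8) t
  have hsq : √(t ^ 2 + 8) ^ 2 = t ^ 2 + 8 := Real.sq_sqrt (by positivity)
  have hrat : 1 / posRoot 8 t = (√(t ^ 2 + 8) - t) / 4 := by
    rw [div_eq_div_iff hpos.ne' (by norm_num)]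
    unfold posRoot
    linear_combination -hsq / 2
  have hle : √(t ^ 2 + 8) ≤ |t| + 2 * √2 := by
    rw [Real.sqrt_le_left (by positivity)]
    nlinarith [sq_abs t, abs_nonneg t, Real.sqrt_nonneg 2,
      Real.sq_sqrt (show (0 : ℝ) ≤ 2 by norm_num)]
  rw [hrat]
  linarith [neg_le_abs t]

lemma one_div_sub_one_div_add_le {x y x' y' : ℝ} (hx : 0 < x) (hy' : 0 < y')
    (hxx' : x ≤ x') (hyy' : y' ≤ y) : 1 / y - 1 / (x + y) ≤ 1 / y' - 1 / (x' + y') := by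
  have key : ∀ {x y : ℝ}, 0 < x → 0 < y → 1 / y - 1 / (x + y) = 1 / (y + y ^ 2 / x) := by
    intro x y hx hy
    field_simp
    ring
  have hx' := hx.trans_le hxx'
  rw [key hx (hy'.trans_le hyy'), key hx' hy']
  gcongr

lemma eq_zero_of_mul_eq_mul_of_mul_add_mul_eq_zero {α β c d e f : ℝ} (hc : 0 < c) (hd : 0 < d)
    (he : 0 < e) (hf : 0 < f) (h₁ : α * c = β * d) (h₂ : α * e + β * f = 0) : α = 0 ∧ β = 0 := by
  have hβ : β * (d * e + c * f) = 0 := by linear_combination -e * h₁ + c * h₂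
  have hβ0 : β = 0 := (mul_eq_zero.1 hβ).resolve_right (by positivity)
  subst hβ0
  exact ⟨by simpa [hc.ne'] using h₁, rfl⟩

lemma tendsto_of_tendsto_even_of_tendsto_odd {X : Type*} [TopologicalSpace X] {u : ℕ → X} {L : X}
    (he : Tendsto (fun k => u (2 * k)) atTop (𝓝 L))
    (ho : Tendsto (fun k => u (2 * k + 1)) atTop (𝓝 L)) : Tendsto u atTop (𝓝 L) := by
  intro s hs
  obtain ⟨N, hN⟩ := eventually_atTop.1 ((he.eventually_mem hs).and (ho.eventually_mem hs))
  refine eventually_atTop.2 ⟨2 * N, fun n hn => ?_⟩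
  obtain ⟨k, rfl | rfl⟩ := Nat.even_or_odd' n
  · exact (hN k (by omega)).1
  · exact (hN k (by omega)).2

lemma map_eq_of_tendsto_even_of_tendsto_odd {X : Type*} [TopologicalSpace X] [T2Space X]
    {T : X → X} {u : ℕ → X} (hu : ∀ n, u (n + 1) = T (u n)) {L₀ L₁ : X}
    (h₀ : Tendsto (fun k => u (2 * k)) atTop (𝓝 L₀))
    (h₁ : Tendsto (fun k => u (2 * k + 1)) atTop (𝓝 L₁))
    (hT₀ : ContinuousAt T L₀) (hT₁ : ContinuousAt T L₁) : T L₀ = L₁ ∧ T L₁ = L₀ := by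
  constructor
  · refine tendsto_nhds_unique ?_ h₁
    simpa only [Function.comp_def, ← hu] using hT₀.tendsto.comp h₀
  · refine tendsto_nhds_unique ?_ (h₀.comp (tendsto_add_atTop_nat 1))
    simpa only [Function.comp_def, ← hu, mul_add] using hT₁.tendsto.comp h₁

lemma exists_tendsto_of_monotone_or_antitone {f : ℕ → ℝ} {l u : ℝ}
    (hf : Monotone f ∨ Antitone f) (hmem : ∀ n, f n ∈ Icc l u) :
    ∃ L ∈ Icc l u, Tendsto f atTop (𝓝 L) := by
  have hrange : range f ⊆ Icc l u := range_subset_iff.2 hmem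
  obtain ⟨L, hL⟩ : ∃ L, Tendsto f atTop (𝓝 L) := hf.elim
    (fun h => ⟨_, tendsto_atTop_ciSup h (bddAbove_Icc.mono hrange)⟩)
    (fun h => ⟨_, tendsto_atTop_ciInf h (bddBelow_Icc.mono hrange)⟩)
  exact ⟨L, isClosed_Icc.mem_of_tendsto hL (Eventually.of_forall hmem), hL⟩

lemma exists_tendsto_of_mem_Icc_prod_Icc {v : ℕ → ℝ × ℝ} {l₁ u₁ l₂ u₂ : ℝ}
    (hmem : ∀ n, v n ∈ Icc l₁ u₁ ×ˢ Icc l₂ u₂)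
    (h₁ : Monotone (fun n => (v n).1) ∨ Antitone (fun n => (v n).1))
    (h₂ : Monotone (fun n => (v n).2) ∨ Antitone (fun n => (v n).2)) :
    ∃ L ∈ Icc l₁ u₁ ×ˢ Icc l₂ u₂, Tendsto v atTop (𝓝 L) := by
  obtain ⟨L₁, hL₁, hv₁⟩ := exists_tendsto_of_monotone_or_antitone h₁ fun n => (hmem n).1
  obtain ⟨L₂, hL₂, hv₂⟩ := exists_tendsto_of_monotone_or_antitone h₂ fun n => (hmem n).2
  exact ⟨(L₁, L₂), ⟨hL₁, hL₂⟩, hv₁.prodMk_nhds hv₂⟩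

noncomputable def dysonMap (a b : ℝ) (z : ℝ × ℝ) : ℝ × ℝ :=
  (posRoot 8 (a - 1 / z.2 + 1 / (z.1 + z.2)), posRoot 8 (b - 1 / z.1 + 1 / (z.1 + z.2)))

/-- `Y = posRoot 6 s` solves `Y - 2/Y = s - 1/(2Y)`; with `1 / posRoot 8 t ≤ (|t| + √2)/2` this
makes the lower edge of `dysonBox` invariant, which is where `s = b - (|a| + √2)/2` comes from. -/
noncomputable def dysonLowerY (a b : ℝ) : ℝ := posRoot 6 (b - (|a| + √2) / 2)

noncomputable def dysonLowerX (a b : ℝ) : ℝ := posRoot 8 (a - 1 / dysonLowerY a b)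

noncomputable def dysonBox (a b : ℝ) : Set (ℝ × ℝ) :=
  Icc (dysonLowerX a b) (posRoot 8 a) ×ˢ Icc (dysonLowerY a b) (posRoot 8 b)

section dyson

variable {a b : ℝ}

variable (a b) in
lemma dysonSeq_zero : dysonSeq a b 0 = (posRoot 8 a, dysonLowerY a b) := rfl

variable (a b) in
lemma dysonSeq_succ (n : ℕ) : dysonSeq a b (n + 1) = dysonMap a b (dysonSeq a b n) := rfl

lemma dysonMap_eq_iff {x y x' y' : ℝ} (hx' : 0 < x') (hy' : 0 < y') :
    dysonMap a b (x, y) = (x', y') ↔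
      x' - 2 / x' = a - 1 / y + 1 / (x + y) ∧ y' - 2 / y' = b - 1 / x + 1 / (x + y) := by
  have h8 : (8 : ℝ) / 4 = 2 := by norm_num
  have h0 : (0 : ℝ) < 8 := by norm_num
  simp only [dysonMap, Prod.mk.injEq, eq_comm (a := posRoot 8 _), eq_posRoot_iff h0 hx',
    eq_posRoot_iff h0 hy', h8]

lemma dysonLowerY_pos : 0 < dysonLowerY a b := posRoot_pos (by norm_num) _

lemma dysonLowerY_sub_two_div :
    dysonLowerY a b - 2 / dysonLowerY a b =
      b - (|a| + √2) / 2 - 1 / (2 * dysonLowerY a b) := by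
  have h := posRoot_sub_div (by norm_num : (0 : ℝ) < 6) (b - (|a| + √2) / 2)
  rw [← dysonLowerY] at h
  have hY := (dysonLowerY_pos (a := a) (b := b)).ne'
  field_simp at h ⊢
  linarith

lemma pos_of_mem_dysonBox {z : ℝ × ℝ} (hz : z ∈ dysonBox a b) : 0 < z.1 ∧ 0 < z.2 :=
  ⟨(posRoot_pos (by norm_num) _).trans_le hz.1.1, dysonLowerY_pos.trans_le hz.2.1⟩

lemma dysonLowerY_le_dysonMap_snd {x y : ℝ} (hx : dysonLowerX a b ≤ x) (hy : 0 < y) :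
    dysonLowerY a b ≤ (dysonMap a b (x, y)).2 := by
  have hY := dysonLowerY_pos (a := a) (b := b)
  have hx0 : 0 < x := (posRoot_pos (by norm_num) _).trans_le hx
  have hinv : 1 / x ≤ (|a| + √2) / 2 + 1 / (2 * dysonLowerY a b) :=
    calc 1 / x ≤ 1 / dysonLowerX a b := one_div_le_one_div_of_le (posRoot_pos (by norm_num) _) hx
      _ ≤ (|a - 1 / dysonLowerY a b| + √2) / 2 := one_div_posRoot_eight_le _
      _ ≤ (|a| + 1 / dysonLowerY a b + √2) / 2 := by
        gcongr
        simpa [abs_of_pos hY] using abs_sub a (1 / dysonLowerY a b)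
      _ = (|a| + √2) / 2 + 1 / (2 * dysonLowerY a b) := by field_simp; ring
  rw [dysonMap, le_posRoot_iff (by norm_num) hY, (by norm_num : (8 : ℝ) / 4 = 2),
    dysonLowerY_sub_two_div]
  have : 0 < 1 / (x + y) := by positivity
  linarith

lemma mapsTo_dysonBox : MapsTo (dysonMap a b) (dysonBox a b) (dysonBox a b) := by
  rintro ⟨x, y⟩ hz
  obtain ⟨hx, hy⟩ := pos_of_mem_dysonBox hz
  have hxy : 0 < 1 / (x + y) := by positivity
  have hy_le : 1 / (x + y) ≤ 1 / y := one_div_le_one_div_of_le hy (by linarith)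
  have hx_le : 1 / (x + y) ≤ 1 / x := one_div_le_one_div_of_le hx (by linarith)
  have hinv_y : 1 / y ≤ 1 / dysonLowerY a b := one_div_le_one_div_of_le dysonLowerY_pos hz.2.1
  refine ⟨⟨posRoot_mono (by norm_num) ?_, posRoot_mono (by norm_num) ?_⟩,
    ⟨dysonLowerY_le_dysonMap_snd hz.1.1 hy, posRoot_mono (by norm_num) ?_⟩⟩ <;>
    dsimp only <;> linarith

lemma dysonSeq_mem_dysonBox (n : ℕ) : dysonSeq a b n ∈ dysonBox a b := by
  induction n with
  | zero =>
    have hY := dysonLowerY_pos (a := a) (b := b)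
    rw [dysonSeq_zero]
    refine ⟨⟨posRoot_mono (by norm_num) ?_, le_rfl⟩, ⟨le_rfl, ?_⟩⟩
    · linarith [one_div_pos.2 hY]
    · rw [le_posRoot_iff (by norm_num) hY, (by norm_num : (8 : ℝ) / 4 = 2),
        dysonLowerY_sub_two_div]
      linarith [one_div_pos.2 (by linarith : 0 < 2 * dysonLowerY a b), abs_nonneg a,
        Real.sqrt_nonneg 2]
  | succ n ih => exact mapsTo_dysonBox ih

lemma continuousAt_dysonMap {z : ℝ × ℝ} (hz : 0 < z.1 ∧ 0 < z.2) :
    ContinuousAt (dysonMap a b) z := by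
  have h1 : z.2 ≠ 0 := hz.2.ne'
  have h2 : z.1 ≠ 0 := hz.1.ne'
  have h3 : z.1 + z.2 ≠ 0 := (add_pos hz.1 hz.2).ne'
  unfold dysonMap posRoot
  fun_prop (disch := assumption)

lemma dysonMap_antitone {z w : ℝ × ℝ} (hz : 0 < z.1 ∧ 0 < z.2) (hw : 0 < w.1 ∧ 0 < w.2)
    (h₁ : w.1 ≤ z.1) (h₂ : z.2 ≤ w.2) :
    (dysonMap a b z).1 ≤ (dysonMap a b w).1 ∧ (dysonMap a b w).2 ≤ (dysonMap a b z).2 := by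
  have hA := one_div_sub_one_div_add_le hw.1 hz.2 h₁ h₂
  have hB := one_div_sub_one_div_add_le hz.2 hw.1 h₂ h₁
  rw [add_comm z.2, add_comm w.2] at hB
  exact ⟨posRoot_mono (by norm_num) (by linarith), posRoot_mono (by norm_num) (by linarith)⟩

variable (a b) in
lemma dysonSeq_zigzag (k : ℕ) :
    ((dysonSeq a b (2 * k + 2)).1 ≤ (dysonSeq a b (2 * k)).1 ∧
      (dysonSeq a b (2 * k)).2 ≤ (dysonSeq a b (2 * k + 2)).2) ∧
    ((dysonSeq a b (2 * k + 1)).1 ≤ (dysonSeq a b (2 * k + 3)).1 ∧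
      (dysonSeq a b (2 * k + 3)).2 ≤ (dysonSeq a b (2 * k + 1)).2) := by
  have step (m n : ℕ) (h : (dysonSeq a b n).1 ≤ (dysonSeq a b m).1 ∧
      (dysonSeq a b m).2 ≤ (dysonSeq a b n).2) :
      (dysonSeq a b (m + 1)).1 ≤ (dysonSeq a b (n + 1)).1 ∧
        (dysonSeq a b (n + 1)).2 ≤ (dysonSeq a b (m + 1)).2 :=
    dysonMap_antitone (pos_of_mem_dysonBox (dysonSeq_mem_dysonBox m))
      (pos_of_mem_dysonBox (dysonSeq_mem_dysonBox n)) h.1 h.2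
  induction k with
  | zero =>
    have h₀ : (dysonSeq a b 2).1 ≤ (dysonSeq a b 0).1 ∧ (dysonSeq a b 0).2 ≤ (dysonSeq a b 2).2 :=
      ⟨(dysonSeq_mem_dysonBox 2).1.2, (dysonSeq_mem_dysonBox 2).2.1⟩
    exact ⟨h₀, step 0 2 h₀⟩
  | succ k ih =>
    have heven := step (2 * k + 3) (2 * k + 1) ih.2
    exact ⟨heven, step (2 * k + 2) (2 * k + 4) heven⟩

lemma eq_of_dysonMap_two_cycle {p q P Q : ℝ} (hp : 0 < p) (hq : 0 < q) (hP : 0 < P) (hQ : 0 < Q)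
    (h₁ : dysonMap a b (p, q) = (P, Q)) (h₂ : dysonMap a b (P, Q) = (p, q)) : P = p ∧ Q = q := by
  obtain ⟨e₁, e₃⟩ := (dysonMap_eq_iff hP hQ).1 h₁
  obtain ⟨e₂, e₄⟩ := (dysonMap_eq_iff hp hq).1 h₂
  have hx : (P - p) * (1 + 2 / (p * P)) =
      -(Q - q) / (q * Q) + ((P - p) + (Q - q)) / ((p + q) * (P + Q)) :=
    calc _ = (P - 2 / P) - (p - 2 / p) := by field_simp; ring
      _ = _ := by rw [e₁, e₂]; field_simp; ring
  have hy : (Q - q) * (1 + 2 / (q * Q)) =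
      -(P - p) / (p * P) + ((P - p) + (Q - q)) / ((p + q) * (P + Q)) :=
    calc _ = (Q - 2 / Q) - (q - 2 / q) := by field_simp; ring
      _ = _ := by rw [e₃, e₄]; field_simp; ring
  have hpP : p * P ≤ (p + q) * (P + Q) := by nlinarith [mul_pos hp hQ, mul_pos hq hP, mul_pos hq hQ]
  have hqQ : q * Q ≤ (p + q) * (P + Q) := by nlinarith [mul_pos hp hQ, mul_pos hq hP, mul_pos hp hP]
  have hw : 2 / ((p + q) * (P + Q)) ≤ 2 / (p * P) :=
    div_le_div_of_nonneg_left zero_le_two (by positivity) hpP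
  have hw' : 2 / ((p + q) * (P + Q)) ≤ 2 / (q * Q) :=
    div_le_div_of_nonneg_left zero_le_two (by positivity) hqQ
  have h := eq_zero_of_mul_eq_mul_of_mul_add_mul_eq_zero (α := P - p) (β := Q - q)
    (c := 1 + 1 / (p * P)) (d := 1 + 1 / (q * Q))
    (e := 1 + 1 / (p * P) + (2 / (p * P) - 2 / ((p + q) * (P + Q))))
    (f := 1 + 1 / (q * Q) + (2 / (q * Q) - 2 / ((p + q) * (P + Q))))
    (by positivity) (by positivity) (add_pos_of_pos_of_nonneg (by positivity) (sub_nonneg.2 hw))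
    (add_pos_of_pos_of_nonneg (by positivity) (sub_nonneg.2 hw'))
    (by linear_combination hx - hy) (by linear_combination hx + hy)
  exact h.imp sub_eq_zero.1 sub_eq_zero.1

lemma eq_of_dyson_solutions {p q P Q : ℝ} (hp : 0 < p) (hq : 0 < q) (hP : 0 < P) (hQ : 0 < Q)
    (e₁ : p - 2 / p = a - 1 / q + 1 / (p + q)) (e₂ : q - 2 / q = b - 1 / p + 1 / (p + q))
    (e₃ : P - 2 / P = a - 1 / Q + 1 / (P + Q)) (e₄ : Q - 2 / Q = b - 1 / P + 1 / (P + Q)) :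
    P = p ∧ Q = q := by
  have hx : (P - p) * (1 + 2 / (p * P)) =
      (Q - q) / (q * Q) - ((P - p) + (Q - q)) / ((p + q) * (P + Q)) :=
    calc _ = (P - 2 / P) - (p - 2 / p) := by field_simp; ring
      _ = _ := by rw [e₁, e₃]; field_simp; ring
  have hy : (Q - q) * (1 + 2 / (q * Q)) =
      (P - p) / (p * P) - ((P - p) + (Q - q)) / ((p + q) * (P + Q)) :=
    calc _ = (Q - 2 / Q) - (q - 2 / q) := by field_simp; ring
      _ = _ := by rw [e₂, e₄]; field_simp; ring
  have h := eq_zero_of_mul_eq_mul_of_mul_add_mul_eq_zero (α := P - p) (β := Q - q)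
    (c := 1 + 3 / (p * P)) (d := 1 + 3 / (q * Q))
    (e := 1 + 1 / (p * P) + 2 / ((p + q) * (P + Q)))
    (f := 1 + 1 / (q * Q) + 2 / ((p + q) * (P + Q)))
    (by positivity) (by positivity) (by positivity) (by positivity)
    (by linear_combination hx - hy) (by linear_combination hx + hy)
  exact h.imp sub_eq_zero.1 sub_eq_zero.1

variable (a b) in
theorem exists_fixedPoint_tendsto_dysonSeq :
    ∃ x y : ℝ, 0 < x ∧ 0 < y ∧ dysonMap a b (x, y) = (x, y) ∧
      Tendsto (dysonSeq a b) atTop (𝓝 (x, y)) := by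
  have hzig := dysonSeq_zigzag a b
  obtain ⟨L₀, hL₀, h₀⟩ :=
    exists_tendsto_of_mem_Icc_prod_Icc (v := fun k => dysonSeq a b (2 * k))
    (fun k => dysonSeq_mem_dysonBox _) (.inr (antitone_nat_of_succ_le fun k => (hzig k).1.1))
    (.inl (monotone_nat_of_le_succ fun k => (hzig k).1.2))
  obtain ⟨L₁, hL₁, h₁⟩ :=
    exists_tendsto_of_mem_Icc_prod_Icc (v := fun k => dysonSeq a b (2 * k + 1))
    (fun k => dysonSeq_mem_dysonBox _) (.inl (monotone_nat_of_le_succ fun k => (hzig k).2.1))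
    (.inr (antitone_nat_of_succ_le fun k => (hzig k).2.2))
  obtain ⟨hp, hq⟩ := pos_of_mem_dysonBox hL₀
  obtain ⟨hP, hQ⟩ := pos_of_mem_dysonBox hL₁
  obtain ⟨hT₀, hT₁⟩ := map_eq_of_tendsto_even_of_tendsto_odd (dysonSeq_succ a b) h₀ h₁
    (continuousAt_dysonMap ⟨hp, hq⟩) (continuousAt_dysonMap ⟨hP, hQ⟩)
  obtain ⟨P, Q⟩ := L₁
  obtain ⟨hPp, hQq⟩ := eq_of_dysonMap_two_cycle hp hq hP hQ hT₀ hT₁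
  subst hPp hQq
  exact ⟨_, _, hp, hq, hT₀, tendsto_of_tendsto_even_of_tendsto_odd h₀ h₁⟩

end dyson

/-- Proposition 4.2 of the paper. The system
`x - 2/x = a - 1/y + 1/(x+y)`, `y - 2/y = b - 1/x + 1/(x+y)` has a unique positive
solution `(x*, y*)`, and the iterates `(x_n, y_n)` converge to it. -/
theorem dyson_three_particle_unique_solution_and_iteration (a b : ℝ) :
    ∃ xs ys : ℝ, 0 < xs ∧ 0 < ys ∧
      xs - 2 / xs = a - 1 / ys + 1 / (xs + ys) ∧
      ys - 2 / ys = b - 1 / xs + 1 / (xs + ys) ∧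
      (∀ x y : ℝ, 0 < x → 0 < y →
        x - 2 / x = a - 1 / y + 1 / (x + y) →
        y - 2 / y = b - 1 / x + 1 / (x + y) → x = xs ∧ y = ys) ∧
      Tendsto (fun n : ℕ => (dysonSeq a b n).1) atTop (nhds xs) ∧
      Tendsto (fun n : ℕ => (dysonSeq a b n).2) atTop (nhds ys) := by
  obtain ⟨xs, ys, hxs, hys, hfix, hlim⟩ := exists_fixedPoint_tendsto_dysonSeq a b
  obtain ⟨hx_eq, hy_eq⟩ := (dysonMap_eq_iff hxs hys).1 hfix
  exact ⟨xs, ys, hxs, hys, hx_eq, hy_eq,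
    fun x y hx hy hx' hy' => eq_of_dyson_solutions hxs hys hx hy hx_eq hy_eq hx' hy',
    hlim.fst_nhds, hlim.snd_nhds⟩
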